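/- Lagrange interpolation error in terms of the L¹ norm of the derivative. Fix p ≥ 0 and nodes 0 ≤ τ₀ < τ₁ < ⋯ < τ_p ≤ 1. There exists a constant C_p, depending only on p and the nodes, such that for every interval [a,b] with a < b and every (p+1)-times continuously differentiable function w : [a,b] → ℝ^N, the Lagrange interpolant πw of degree p at the points a + τ_k(b−a), k = 0,…,p, satisfies sup_{t∈[a,b]} ‖w(t) − (πw)(t)‖ ≤ C_p (b−a)^p ∫ₐᵇ ‖w^{(p+1)}(s)‖ ds. -/

import Mathlib

open MeasureTheory

/-- The Lagrange nodal basis `{λ_k}` of polynomials of degree `≤ p` on `[0,1]`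
associated with nodes `τ₀ < ⋯ < τ_p`, i.e. `λ_i(τ_j) = δ_{ij}`. -/
noncomputable def lagB (p : ℕ) (τ : Fin (p + 1) → ℝ) (k : Fin (p + 1)) (x : ℝ) : ℝ :=
  ∏ j ∈ Finset.univ.erase k, (x - τ j) / (τ k - τ j)

/-- The degree-`p` Lagrange interpolant of `w` on the interval `[a, b]` at the
nodal points `a + τ_k (b − a)`. -/
noncomputable def interpOn {N : ℕ} (p : ℕ) (τ : Fin (p + 1) → ℝ)
    (w : ℝ → EuclideanSpace ℝ (Fin N)) (a b s : ℝ) : EuclideanSpace ℝ (Fin N) :=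
  ∑ k, lagB p τ k ((s - a) / (b - a)) • w (a + τ k * (b - a))

/-! The interpolation operator `π` reproduces polynomials of degree `≤ p`, in particular the
Taylor polynomial `T` of `w` at `a`, so `w - πw = (w - T) - π(w - T)`. The integral form of the
Taylor remainder bounds `‖w - T‖` on `[a, b]` by `(b - a)^p / p! * ∫ₐᵇ ‖w⁽ᵖ⁺¹⁾‖`, and `π` enlarges
sup norms at most by the Lebesgue constant `Λ = max_{[0,1]} ∑ₖ |λₖ|`; hence `C_p = (1 + Λ) / p!`.
-/

open Set Finset Nat

section Taylor

variable {E : Type*} [NormedAddCommGroup E] [NormedSpace ℝ E] [CompleteSpace E]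
  {f : ℝ → E} {a b t : ℝ} {n : ℕ}

theorem sub_taylorWithinEval_Icc_eq_integral (hab : a < b) (ht : t ∈ Icc a b)
    (hf : ContDiffOn ℝ (n + 1 : ℕ) f (Icc a b)) :
    f t - taylorWithinEval f n (Icc a b) a t
      = ∫ x in a..t, ((n ! : ℝ)⁻¹ * (t - x) ^ n) • iteratedDerivWithin (n + 1) f (Icc a b) x := by
  have hfn : ContDiffOn ℝ n f (Icc a b) := hf.of_le (by exact_mod_cast n.le_succ)
  have hD : ContinuousOn (iteratedDerivWithin (n + 1) f (Icc a b)) (Icc a b) :=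
    hf.continuousOn_iteratedDerivWithin le_rfl (uniqueDiffOn_Icc hab)
  have hsub : Icc a t ⊆ Icc a b := Icc_subset_Icc_right ht.2
  rw [intervalIntegral.integral_eq_sub_of_hasDeriv_right_of_le
    (f := fun y => taylorWithinEval f n (Icc a b) y t) ht.1 ?_ ?_ ?_, taylorWithinEval_self]
  · exact (continuousOn_taylorWithinEval (uniqueDiffOn_Icc hab) hfn).mono hsub
  · intro y hy
    refine (taylorWithinEval_hasDerivAt_Ioo t hab ⟨hy.1, hy.2.trans_le ht.2⟩ hfn ?_).hasDerivWithinAt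
    exact (hf.differentiableOn_iteratedDerivWithin (by exact_mod_cast n.lt_succ_self)
      (uniqueDiffOn_Icc hab)).mono Ioo_subset_Icc_self
  · refine ContinuousOn.intervalIntegrable ?_
    rw [uIcc_of_le ht.1]
    exact (continuousOn_const.mul ((continuousOn_const.sub continuousOn_id).pow n)).smul
      (hD.mono hsub)

theorem norm_sub_taylorWithinEval_Icc_le (hab : a < b) (ht : t ∈ Icc a b)
    (hf : ContDiffOn ℝ (n + 1 : ℕ) f (Icc a b)) :
    ‖f t - taylorWithinEval f n (Icc a b) a t‖
      ≤ (n ! : ℝ)⁻¹ * (b - a) ^ n * ∫ x in a..b, ‖iteratedDerivWithin (n + 1) f (Icc a b) x‖ := by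
  set D := iteratedDerivWithin (n + 1) f (Icc a b)
  have hC : 0 ≤ (n ! : ℝ)⁻¹ * (b - a) ^ n := by have := hab.le; positivity
  have hCD : IntervalIntegrable (fun x => (n ! : ℝ)⁻¹ * (b - a) ^ n * ‖D x‖) volume a b := by
    refine ContinuousOn.intervalIntegrable ?_
    rw [uIcc_of_le hab.le]
    exact continuousOn_const.mul
      (hf.continuousOn_iteratedDerivWithin le_rfl (uniqueDiffOn_Icc hab)).norm
  rw [sub_taylorWithinEval_Icc_eq_integral hab ht hf, ← intervalIntegral.integral_const_mul]
  calc ‖∫ x in a..t, ((n ! : ℝ)⁻¹ * (t - x) ^ n) • D x‖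
      ≤ ∫ x in a..t, (n ! : ℝ)⁻¹ * (b - a) ^ n * ‖D x‖ := by
        refine intervalIntegral.norm_integral_le_of_norm_le ht.1
          (Filter.Eventually.of_forall fun x hx => ?_) (hCD.mono_set ?_)
        · have htx : 0 ≤ t - x := sub_nonneg.2 hx.2
          rw [norm_smul, Real.norm_of_nonneg (by positivity)]
          gcongr
          exacts [ht.2, hx.1.le]
        · rw [uIcc_of_le ht.1, uIcc_of_le hab.le]
          exact Icc_subset_Icc_right ht.2
    _ ≤ ∫ x in a..b, (n ! : ℝ)⁻¹ * (b - a) ^ n * ‖D x‖ :=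
        intervalIntegral.integral_mono_interval le_rfl ht.1 ht.2
          (Filter.Eventually.of_forall fun x => by positivity) hCD

end Taylor

section Interpolation

variable {p : ℕ} {τ : Fin (p + 1) → ℝ}

theorem lagB_eq_eval_basis (k : Fin (p + 1)) (u : ℝ) :
    lagB p τ k u = (Lagrange.basis univ τ k).eval u := by
  simp only [lagB, Lagrange.basis, Lagrange.basisDivisor, Polynomial.eval_prod]
  exact prod_congr rfl fun j _ => by simp [div_eq_mul_inv, mul_comm]

theorem continuous_lagB (k : Fin (p + 1)) : Continuous (lagB p τ k) := by
  simpa only [funext (lagB_eq_eval_basis k)] using (Lagrange.basis univ τ k).continuous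

theorem exists_sum_abs_lagB_le (p : ℕ) (τ : Fin (p + 1) → ℝ) :
    ∃ Λ : ℝ, ∀ u ∈ Icc (0 : ℝ) 1, ∑ k, |lagB p τ k u| ≤ Λ := by
  obtain ⟨Λ, hΛ⟩ := isCompact_Icc.bddAbove_image
    (continuous_finsetSum univ fun k _ => (continuous_lagB (τ := τ) k).abs).continuousOn
  exact ⟨Λ, fun u hu => hΛ (mem_image_of_mem _ hu)⟩

theorem sum_lagB_mul_pow (hτ : Function.Injective τ) {i : ℕ} (hi : i ≤ p) (u : ℝ) :
    ∑ k, lagB p τ k u * τ k ^ i = u ^ i := by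
  have hdeg : ((Polynomial.X : Polynomial ℝ) ^ i).degree < (univ : Finset (Fin (p + 1))).card := by
    rw [Polynomial.degree_X_pow, Finset.card_univ, Fintype.card_fin]
    exact_mod_cast i.lt_succ_of_le hi
  have h := congrArg (Polynomial.eval u) (Lagrange.eq_interpolate hτ.injOn hdeg)
  simp only [Lagrange.interpolate_apply, Polynomial.eval_finsetSum, Polynomial.eval_mul,
    Polynomial.eval_C, Polynomial.eval_pow, Polynomial.eval_X, ← lagB_eq_eval_basis] at h
  rw [h]
  exact sum_congr rfl fun k _ => mul_comm _ _

variable {N : ℕ}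

theorem interpOn_sub (v w : ℝ → EuclideanSpace ℝ (Fin N)) (a b s : ℝ) :
    interpOn p τ (v - w) a b s = interpOn p τ v a b s - interpOn p τ w a b s := by
  simp only [interpOn, Pi.sub_apply, smul_sub, sum_sub_distrib]

theorem interpOn_polynomial (hτ : Function.Injective τ) (c : ℕ → EuclideanSpace ℝ (Fin N))
    {a b : ℝ} (hab : a ≠ b) (s : ℝ) :
    interpOn p τ (fun t => ∑ i ∈ range (p + 1), (t - a) ^ i • c i) a b s
      = ∑ i ∈ range (p + 1), (s - a) ^ i • c i := by
  have hba : b - a ≠ 0 := sub_ne_zero.2 hab.symm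
  simp only [interpOn, add_sub_cancel_left, smul_sum, smul_smul]
  rw [sum_comm]
  refine sum_congr rfl fun i hi => ?_
  rw [← sum_smul]
  congr 1
  calc ∑ k, lagB p τ k ((s - a) / (b - a)) * (τ k * (b - a)) ^ i
      = (b - a) ^ i * ∑ k, lagB p τ k ((s - a) / (b - a)) * τ k ^ i := by
        rw [mul_sum]
        exact sum_congr rfl fun k _ => by rw [mul_pow]; ring
    _ = (s - a) ^ i := by
        rw [sum_lagB_mul_pow hτ (Nat.lt_succ_iff.1 (mem_range.1 hi)), ← mul_pow,
          mul_div_cancel₀ _ hba]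

theorem interpOn_taylorWithinEval (hτ : Function.Injective τ) (w : ℝ → EuclideanSpace ℝ (Fin N))
    (S : Set ℝ) {a b : ℝ} (hab : a ≠ b) (s : ℝ) :
    interpOn p τ (taylorWithinEval w p S a) a b s = taylorWithinEval w p S a s := by
  simp only [funext (taylor_within_apply w p S a), mul_comm _ ((_ : ℝ) ^ _), mul_smul]
  exact interpOn_polynomial hτ _ hab s

theorem norm_interpOn_le (v : ℝ → EuclideanSpace ℝ (Fin N)) {a b s Λ R : ℝ}
    (hΛ : ∑ k, |lagB p τ k ((s - a) / (b - a))| ≤ Λ)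
    (hR : ∀ k, ‖v (a + τ k * (b - a))‖ ≤ R) :
    ‖interpOn p τ v a b s‖ ≤ Λ * R := by
  have hR0 : 0 ≤ R := (norm_nonneg _).trans (hR 0)
  calc ‖interpOn p τ v a b s‖
      ≤ ∑ k, |lagB p τ k ((s - a) / (b - a))| * ‖v (a + τ k * (b - a))‖ := by
        refine (norm_sum_le _ _).trans_eq (sum_congr rfl fun k _ => ?_)
        rw [norm_smul, Real.norm_eq_abs]
    _ ≤ ∑ k, |lagB p τ k ((s - a) / (b - a))| * R := by gcongr; exact hR _
    _ ≤ Λ * R := by rw [← sum_mul]; gcongr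

end Interpolation

/-- **Lagrange interpolation error in terms of the L¹ norm of the derivative.**
There is a constant `C_p`, depending only on `p` and the nodes, such that for every
interval `[a,b]` and every `(p+1)`-times continuously differentiable `w : [a,b] → ℝ^N`,
`sup_{[a,b]} ‖w − πw‖ ≤ C_p (b−a)^p ∫ₐᵇ ‖w^{(p+1)}‖`. -/
theorem lagrange_interpolation_error (p : ℕ) (τ : Fin (p + 1) → ℝ)
    (hτ : StrictMono τ) (hτ0 : 0 ≤ τ 0) (hτ1 : τ (Fin.last p) ≤ 1) :
    ∃ Cp : ℝ, ∀ (N : ℕ) (a b : ℝ), a < b →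
      ∀ w : ℝ → EuclideanSpace ℝ (Fin N), ContDiffOn ℝ (p + 1 : ℕ) w (Set.Icc a b) →
        ∀ s ∈ Set.Icc a b,
          ‖w s - interpOn p τ w a b s‖
            ≤ Cp * (b - a) ^ p
              * ∫ x in a..b, ‖iteratedDerivWithin (p + 1) w (Set.Icc a b) x‖ := by
  obtain ⟨Λ, hΛ⟩ := exists_sum_abs_lagB_le p τ
  have hτ_mem : ∀ k, τ k ∈ Icc (0 : ℝ) 1 := fun k =>
    ⟨hτ0.trans (hτ.monotone (Fin.zero_le k)), (hτ.monotone (Fin.le_last k)).trans hτ1⟩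
  refine ⟨(1 + Λ) * (p ! : ℝ)⁻¹, fun N a b hab w hw s hs => ?_⟩
  have hba : 0 < b - a := sub_pos.2 hab
  set T := taylorWithinEval w p (Icc a b) a
  set R := (p ! : ℝ)⁻¹ * (b - a) ^ p * ∫ x in a..b, ‖iteratedDerivWithin (p + 1) w (Icc a b) x‖
  have hR : ∀ t ∈ Icc a b, ‖w t - T t‖ ≤ R := fun t ht =>
    norm_sub_taylorWithinEval_Icc_le hab ht hw
  have hnode : ∀ k, a + τ k * (b - a) ∈ Icc a b := fun k =>
    ⟨by nlinarith [(hτ_mem k).1], by nlinarith [(hτ_mem k).2]⟩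
  have hs01 : (s - a) / (b - a) ∈ Icc (0 : ℝ) 1 :=
    ⟨div_nonneg (sub_nonneg.2 hs.1) hba.le, div_le_one_of_le₀ (by linarith [hs.2]) hba.le⟩
  have hsplit : w s - interpOn p τ w a b s = (w s - T s) - interpOn p τ (w - T) a b s := by
    rw [interpOn_sub, interpOn_taylorWithinEval hτ.injective _ _ hab.ne]
    abel
  have hπ : ‖interpOn p τ (w - T) a b s‖ ≤ Λ * R :=
    norm_interpOn_le _ (hΛ _ hs01) fun k => hR _ (hnode k)
  calc ‖w s - interpOn p τ w a b s‖
      ≤ ‖w s - T s‖ + ‖interpOn p τ (w - T) a b s‖ := hsplit ▸ norm_sub_le _ _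
    _ ≤ R + Λ * R := add_le_add (hR s hs) hπ
    _ = (1 + Λ) * (p ! : ℝ)⁻¹ * (b - a) ^ p
          * ∫ x in a..b, ‖iteratedDerivWithin (p + 1) w (Icc a b) x‖ := by
        simp only [R]; ring
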